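/- If G is a locally finite weighted graph whose Ollivier curvature satisfies Ric(G) ≥ K for some K ∈ ℝ, then G is stochastically complete, i.e., P_t 1 = 1 for all t > 0. -/

import Mathlib

open scoped BigOperators

/-- A locally finite weighted graph. -/
structure WeightedGraph (V : Type) where
  w : V → V → ℝ
  m : V → ℝ
  symm : ∀ x y, w x y = w y x
  loopless : ∀ x, w x x = 0
  nonneg : ∀ x y, 0 ≤ w x y
  mpos : ∀ x, 0 < m x
  locFin : ∀ x, Set.Finite {y | w x y ≠ 0}

namespace WeightedGraph

variable {V : Type} (G : WeightedGraph V)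

/-- The underlying simple graph. -/
def toSimple : SimpleGraph V where
  Adj x y := x ≠ y ∧ G.w x y ≠ 0
  symm := by
    constructor
    intro x y h
    exact ⟨h.1.symm, by rw [G.symm y x]; exact h.2⟩
  loopless := by constructor; intro x h; exact h.1 rfl

/-- The combinatorial graph distance. -/
noncomputable def dist (x y : V) : ℕ := G.toSimple.dist x y

/-- The graph Laplacian. -/
noncomputable def lap (f : V → ℝ) (x : V) : ℝ :=
  (∑ᶠ y, G.w x y * (f y - f x)) / G.m x

/-- The weighted vertex degree. -/
noncomputable def deg (x : V) : ℝ := (∑ᶠ y, G.w x y) / G.m x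

/-- `f` is `1`-Lipschitz with respect to the combinatorial distance. -/
def Lip1 (f : V → ℝ) : Prop := ∀ x y, |f x - f y| ≤ (G.dist x y : ℝ)

/-- The Ollivier curvature, via the limit-free formula
`κ(x,y) = inf {∇_{xy} Δ f : f ∈ Lip(1) ∩ C_c(V), ∇_{yx} f = 1}`. -/
noncomputable def curv (x y : V) : ℝ :=
  sInf { c | ∃ f : V → ℝ, G.Lip1 f ∧ (Function.support f).Finite ∧
    f y - f x = (G.dist x y : ℝ) ∧ c = (G.lap f x - G.lap f y) / (G.dist x y : ℝ) }

end WeightedGraph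

/-- `u` is a non-negative bounded solution of the heat equation with initial datum `f`. -/
def IsHeatSolution {V : Type} (G : WeightedGraph V) (f : V → ℝ) (u : ℝ → V → ℝ) : Prop :=
  u 0 = f ∧ (∀ t x, 0 ≤ t → 0 ≤ u t x) ∧ (∃ C, ∀ t x, 0 ≤ t → u t x ≤ C) ∧
  ∀ x t, 0 ≤ t → HasDerivWithinAt (fun s => u s x) (G.lap (u t) x) (Set.Ici 0) t

/-- `P` is the minimal heat semigroup: for every non-negative bounded `f`, `t ↦ P t f` is the
smallest non-negative bounded solution of the heat equation with initial datum `f`; on signed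
bounded functions it is given by linearity from the positive and negative parts. -/
def IsHeatSemigroup {V : Type} (G : WeightedGraph V) (P : ℝ → (V → ℝ) → V → ℝ) : Prop :=
  (∀ f : V → ℝ, (∀ x, 0 ≤ f x) → (∃ C, ∀ x, f x ≤ C) →
    IsHeatSolution G f (fun t => P t f) ∧
    ∀ u, IsHeatSolution G f u → ∀ t x, 0 ≤ t → P t f x ≤ u t x) ∧
  (∀ f : V → ℝ, (∃ C, ∀ x, |f x| ≤ C) → ∀ t x,
    P t f x = P t (fun y => max (f y) 0) x - P t (fun y => max (-f y) 0) x)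

/-!
Let `γ = d(x₀, ·)`. Testing the curvature bound at `x₀ ≠ y`, `R = d(x₀, y)`, against the tent
`max (min γ (2R + 2 - γ)) 0`, which agrees with `γ` around `y` and is `1`-Lipschitz, gives
`Δγ(y) ≤ Deg(x₀) - K γ(y)`. So `φ = 1 + γ` is a Lyapunov function: `Δφ ≤ μ φ` and its sublevel
sets are finite balls. For `u = 1 - P_t 1`, which solves the heat equation with `u₀ = 0`, the
maximum principle on these finite sets yields `u ≤ δ φ e^{λt}` for every `δ > 0` and any `λ > μ`
(the barrier is a strict supersolution, so it cannot be touched from below for the first time);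
hence `u ≤ 0`, while minimality of `P_t 1` gives `u ≥ 0`.
-/

open Set Real

theorem IsMaxOn.hasDerivWithinAt_nonneg_of_Icc {φ : ℝ → ℝ} {a t d : ℝ} (hat : a < t)
    (hmax : IsMaxOn φ (Icc a t) t) (hd : HasDerivWithinAt φ d (Icc a t) t) : 0 ≤ d := by
  have hcone : a - t ∈ posTangentConeAt (Icc a t) t :=
    sub_mem_posTangentConeAt_of_segment_subset (by rw [segment_symm, segment_eq_Icc hat.le])
  have h : (a - t) * d ≤ 0 := by
    simpa using hmax.localize.hasFDerivWithinAt_nonpos hd.hasFDerivWithinAt hcone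
  nlinarith

theorem exists_first_nonneg {f : ℝ → ℝ} {a b : ℝ} (hab : a ≤ b) (hf : ContinuousOn f (Icc a b))
    (ha : f a < 0) (hb : 0 ≤ f b) : ∃ t ∈ Ioc a b, 0 ≤ f t ∧ ∀ s ∈ Ico a t, f s < 0 := by
  set S := Icc a b ∩ f ⁻¹' Ici 0
  have hS : IsClosed S := hf.preimage_isClosed_of_isClosed isClosed_Icc isClosed_Ici
  have hbdd : BddBelow S := ⟨a, fun s hs => hs.1.1⟩
  have hmem : sInf S ∈ S := hS.csInf_mem ⟨b, ⟨hab, le_rfl⟩, hb⟩ hbdd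
  refine ⟨sInf S, ⟨hmem.1.1.lt_of_ne ?_, hmem.1.2⟩, hmem.2, fun s hs => ?_⟩
  · rintro h
    exact ha.not_ge (h ▸ hmem.2)
  · by_contra! hfs
    exact (csInf_le hbdd ⟨⟨hs.1, hs.2.le.trans hmem.1.2⟩, hfs⟩).not_gt hs.2

theorem exists_first_touch {ι : Type*} {B : Finset ι} {g : ℝ → ι → ℝ} {a b : ℝ} (hab : a ≤ b)
    (hg : ∀ i ∈ B, ContinuousOn (fun s => g s i) (Icc a b)) (ha : ∀ i ∈ B, g a i < 0)
    {i₀ : ι} (hi₀ : i₀ ∈ B) (hb : 0 ≤ g b i₀) :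
    ∃ t ∈ Ioc a b, ∃ i ∈ B, 0 ≤ g t i ∧ (∀ j ∈ B, g t j ≤ g t i) ∧
      IsMaxOn (fun s => g s i) (Icc a t) t := by
  have hB : B.Nonempty := ⟨i₀, hi₀⟩
  obtain ⟨t, ht, hMt, hMbefore⟩ := exists_first_nonneg (f := fun s => B.sup' hB (g s)) hab
    (ContinuousOn.finset_sup'_apply hB hg) ((Finset.sup'_lt_iff hB).2 ha)
    (Finset.le_sup'_of_le _ hi₀ hb)
  obtain ⟨i, hi, hMi⟩ := Finset.exists_mem_eq_sup' hB (g t)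
  have hti : 0 ≤ g t i := hMi ▸ hMt
  refine ⟨t, ht, i, hi, hti, fun j hj => hMi ▸ Finset.le_sup' (g t) hj, fun s hs => ?_⟩
  show g s i ≤ g t i
  rcases hs.2.lt_or_eq with hlt | rfl
  · exact (Finset.le_sup' (g s) hi).trans ((hMbefore s ⟨hs.1, hlt⟩).le.trans hti)
  · exact le_rfl

namespace WeightedGraph

variable {V : Type} (G : WeightedGraph V)

section Laplacian

theorem lap_eq_sum (f : V → ℝ) (x : V) :
    G.lap f x = (∑ y ∈ (G.locFin x).toFinset, G.w x y * (f y - f x)) / G.m x := by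
  rw [lap, finsum_eq_finsetSum_of_support_subset]
  intro y hy
  simpa using left_ne_zero_of_mul hy

theorem deg_eq_sum (x : V) : G.deg x = (∑ y ∈ (G.locFin x).toFinset, G.w x y) / G.m x := by
  rw [deg, finsum_eq_finsetSum_of_support_subset]
  intro y hy
  simpa using hy

theorem deg_nonneg (x : V) : 0 ≤ G.deg x := by
  rw [deg_eq_sum]
  exact div_nonneg (Finset.sum_nonneg fun y _ => G.nonneg x y) (G.mpos x).le

theorem lap_const (c : ℝ) (x : V) : G.lap (fun _ => c) x = 0 := by
  simp [lap]

theorem lap_sub (f g : V → ℝ) (x : V) :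
    G.lap (fun z => f z - g z) x = G.lap f x - G.lap g x := by
  rw [lap_eq_sum, lap_eq_sum, lap_eq_sum, ← sub_div, ← Finset.sum_sub_distrib]
  exact congrArg (· / G.m x) (Finset.sum_congr rfl fun y _ => by ring)

theorem lap_const_mul (c : ℝ) (f : V → ℝ) (x : V) :
    G.lap (fun z => c * f z) x = c * G.lap f x := by
  rw [lap_eq_sum, lap_eq_sum, mul_div_assoc', Finset.mul_sum]
  exact congrArg (· / G.m x) (Finset.sum_congr rfl fun y _ => by ring)

theorem lap_const_sub (c : ℝ) (f : V → ℝ) (x : V) : G.lap (fun z => c - f z) x = -G.lap f x := by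
  rw [lap_sub, lap_const, zero_sub]

theorem lap_congr {f g : V → ℝ} {x : V} (hfg : ∀ y, G.w x y ≠ 0 → f y = g y) (hx : f x = g x) :
    G.lap f x = G.lap g x := by
  rw [lap_eq_sum, lap_eq_sum]
  refine congrArg (· / G.m x) (Finset.sum_congr rfl fun y hy => ?_)
  rw [hfg y (by simpa using hy), hx]

theorem lap_le_deg_of_sub_le_one {f : V → ℝ} {x : V} (hf : ∀ y, G.w x y ≠ 0 → f y - f x ≤ 1) :
    G.lap f x ≤ G.deg x := by
  rw [lap_eq_sum, deg_eq_sum]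
  refine div_le_div_of_nonneg_right (Finset.sum_le_sum fun y hy => ?_) (G.mpos x).le
  exact mul_le_of_le_one_right (G.nonneg x y) (hf y (by simpa using hy))

theorem lap_nonpos_of_forall_le {f : V → ℝ} {x : V} (hf : ∀ y, f y ≤ f x) : G.lap f x ≤ 0 := by
  rw [lap_eq_sum]
  refine div_nonpos_of_nonpos_of_nonneg (Finset.sum_nonpos fun y _ => ?_) (G.mpos x).le
  exact mul_nonpos_of_nonneg_of_nonpos (G.nonneg x y) (sub_nonpos.2 (hf y))

end Laplacian

section Distance

theorem dist_self (x : V) : G.dist x x = 0 := SimpleGraph.dist_self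

theorem dist_comm (x y : V) : G.dist x y = G.dist y x := SimpleGraph.dist_comm

theorem dist_le_one_of_w_ne_zero {x y : V} (h : G.w x y ≠ 0) : G.dist x y ≤ 1 := by
  have hadj : G.toSimple.Adj x y := ⟨fun hxy => h (hxy ▸ G.loopless x), h⟩
  simpa [dist] using SimpleGraph.dist_le hadj.toWalk

theorem finite_setOf_dist_le (hconn : G.toSimple.Connected) (x : V) (n : ℕ) :
    {z | G.dist x z ≤ n}.Finite := by
  induction n with
  | zero =>
    refine (finite_singleton x).subset fun z hz => ?_
    exact (hconn.dist_eq_zero_iff.1 (Nat.le_zero.1 hz)).symm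
  | succ n ih =>
    refine (ih.union (ih.biUnion fun y _ => G.locFin y)).subset fun z hz => ?_
    rcases Nat.lt_or_eq_of_le (show G.dist x z ≤ n + 1 from hz) with hlt | heq
    · exact Or.inl (Nat.lt_succ_iff.1 hlt)
    obtain ⟨p, hp⟩ := hconn.exists_walk_length_eq_dist z x
    cases p with
    | nil => simp [dist] at heq
    | @cons _ y _ hadj q =>
      have hq : G.dist x y ≤ n := by
        have hqlen := SimpleGraph.dist_le q
        simp only [SimpleGraph.Walk.length_cons] at hp
        rw [dist, SimpleGraph.dist_comm] at heq ⊢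
        omega
      exact Or.inr (mem_biUnion hq (show G.w y z ≠ 0 by rw [G.symm]; exact hadj.2))

end Distance

section Lipschitz

variable {G}

theorem lip1_const (c : ℝ) : G.Lip1 fun _ => c := fun x y => by simp

theorem lip1_dist (hconn : G.toSimple.Connected) (x₀ : V) : G.Lip1 fun z => (G.dist x₀ z : ℝ) := by
  intro a b
  have hab : (G.dist x₀ a : ℝ) ≤ G.dist x₀ b + G.dist a b := by
    rw [G.dist_comm a b]; exact_mod_cast hconn.dist_triangle
  have hba : (G.dist x₀ b : ℝ) ≤ G.dist x₀ a + G.dist a b := by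
    exact_mod_cast hconn.dist_triangle
  rw [abs_sub_le_iff]
  constructor <;> linarith

theorem Lip1.const_sub {f : V → ℝ} (hf : G.Lip1 f) (c : ℝ) : G.Lip1 fun z => c - f z :=
  fun x y => by rw [sub_sub_sub_cancel_left, abs_sub_comm]; exact hf x y

theorem Lip1.min {f g : V → ℝ} (hf : G.Lip1 f) (hg : G.Lip1 g) :
    G.Lip1 fun z => min (f z) (g z) :=
  fun x y => (abs_min_sub_min_le_max _ _ _ _).trans (max_le (hf x y) (hg x y))

theorem Lip1.max {f g : V → ℝ} (hf : G.Lip1 f) (hg : G.Lip1 g) :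
    G.Lip1 fun z => max (f z) (g z) :=
  fun x y => (abs_max_sub_max_le_max _ _ _ _).trans (max_le (hf x y) (hg x y))

theorem Lip1.lap_le_deg {f : V → ℝ} (hf : G.Lip1 f) (x : V) : G.lap f x ≤ G.deg x := by
  refine G.lap_le_deg_of_sub_le_one fun y hy => ?_
  calc f y - f x ≤ |f y - f x| := le_abs_self _
    _ ≤ G.dist y x := hf y x
    _ ≤ 1 := by rw [G.dist_comm]; exact_mod_cast G.dist_le_one_of_w_ne_zero hy

theorem Lip1.neg_deg_le_lap {f : V → ℝ} (hf : G.Lip1 f) (x : V) : -G.deg x ≤ G.lap f x := by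
  have h := (hf.const_sub 0).lap_le_deg x
  rw [lap_const_sub] at h
  linarith

end Lipschitz

section Curvature

theorem curv_le {f : V → ℝ} {x y : V} (hf : G.Lip1 f) (hsupp : (Function.support f).Finite)
    (hxy : f y - f x = G.dist x y) : G.curv x y ≤ (G.lap f x - G.lap f y) / G.dist x y := by
  refine csInf_le ⟨(-G.deg x - G.deg y) / G.dist x y, ?_⟩ ⟨f, hf, hsupp, hxy, rfl⟩
  rintro c ⟨g, hg, -, -, rfl⟩
  gcongr ?_ / _
  linarith [hg.neg_deg_le_lap x, hg.lap_le_deg y]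

theorem lap_dist_le (hconn : G.toSimple.Connected) {K : ℝ}
    (hRic : ∀ x y, x ≠ y → K ≤ G.curv x y) (x₀ y : V) :
    G.lap (fun z => (G.dist x₀ z : ℝ)) y ≤ G.deg x₀ - K * G.dist x₀ y := by
  have hγ := lip1_dist hconn x₀
  obtain rfl | hne := eq_or_ne x₀ y
  · simpa [G.dist_self] using hγ.lap_le_deg x₀
  set γ : V → ℝ := fun z => (G.dist x₀ z : ℝ)
  set R : ℝ := (G.dist x₀ y : ℝ)
  have hR : 0 < R := Nat.cast_pos.2 (hconn.pos_dist_of_ne hne)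
  set f : V → ℝ := fun z => max (min (γ z) (2 * R + 2 - γ z)) 0
  have hf_eq : ∀ z, γ z ≤ R + 1 → f z = γ z := fun z hz => by
    simp only [f]
    rw [min_eq_left (by linarith), max_eq_left (Nat.cast_nonneg _)]
  have hf : G.Lip1 f := (hγ.min (hγ.const_sub _)).max (lip1_const 0)
  have hsupp : (Function.support f).Finite := by
    refine (G.finite_setOf_dist_le hconn x₀ (2 * G.dist x₀ y + 2)).subset fun z hz => ?_
    by_contra hfar
    have hfar' : 2 * R + 2 < γ z := by
      simp only [γ, R]
      exact_mod_cast (not_le.1 hfar : 2 * G.dist x₀ y + 2 < G.dist x₀ z)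
    exact hz (max_eq_right ((min_le_right _ _).trans (by linarith)))
  have hγx₀ : γ x₀ = 0 := by simp [γ, G.dist_self]
  have hfx₀ : f x₀ = 0 := by rw [hf_eq x₀ (by linarith), hγx₀]
  have hcurv : K * R ≤ G.lap f x₀ - G.lap f y := by
    have hfxy : f y - f x₀ = G.dist x₀ y := by rw [hfx₀, hf_eq y (by linarith)]; simp [γ]
    have hK := (hRic x₀ y hne).trans (G.curv_le hf hsupp hfxy)
    rwa [le_div_iff₀ hR] at hK
  have hfy : G.lap f y = G.lap γ y := by
    refine G.lap_congr (fun z hz => hf_eq z ?_) (hf_eq y (by linarith))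
    have hz1 : (G.dist y z : ℝ) ≤ 1 := by exact_mod_cast G.dist_le_one_of_w_ne_zero hz
    have htri : (G.dist x₀ z : ℝ) ≤ G.dist x₀ y + G.dist y z := by
      exact_mod_cast hconn.dist_triangle
    simp only [γ, R]; linarith
  linarith [hf.lap_le_deg x₀]

end Curvature

structure IsLyapunov (φ : V → ℝ) (μ : ℝ) : Prop where
  pos : ∀ z, 0 < φ z
  lap_le : ∀ z, G.lap φ z ≤ μ * φ z
  finite_sublevel : ∀ N : ℝ, {z | φ z ≤ N}.Finite

theorem isLyapunov_one_add_dist (hconn : G.toSimple.Connected) {K : ℝ}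
    (hRic : ∀ x y, x ≠ y → K ≤ G.curv x y) (x₀ : V) :
    G.IsLyapunov (fun z => 1 + (G.dist x₀ z : ℝ)) (G.deg x₀ + |K|) where
  pos z := by positivity
  lap_le z := by
    have hlap : G.lap (fun z => 1 + (G.dist x₀ z : ℝ)) z = G.lap (fun z => (G.dist x₀ z : ℝ)) z :=
      by simpa [lap_const] using (G.lap_sub (fun z => 1 + (G.dist x₀ z : ℝ)) (fun _ => 1) z).symm
    rw [hlap]
    have hd : (0 : ℝ) ≤ G.dist x₀ z := Nat.cast_nonneg _
    nlinarith [G.lap_dist_le hconn hRic x₀ z, G.deg_nonneg x₀, neg_abs_le K, abs_nonneg K]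
  finite_sublevel N := by
    refine (G.finite_setOf_dist_le hconn x₀ ⌈N⌉₊).subset fun z (hz : 1 + _ ≤ N) => ?_
    have : (G.dist x₀ z : ℝ) ≤ ⌈N⌉₊ := by linarith [Nat.le_ceil N]
    exact_mod_cast this

section MaximumPrinciple

variable {G} {φ : V → ℝ} {μ : ℝ} {u : ℝ → V → ℝ}

theorem exists_hasDerivWithinAt_sub_barrier_lt_lap (hφ : G.IsLyapunov φ μ)
    (hu : ∀ z t, 0 ≤ t → HasDerivWithinAt (fun s => u s z) (G.lap (u t) z) (Ici 0) t)
    {δ ν : ℝ} (hδ : 0 < δ) (hν : μ < ν) {t : ℝ} (ht : 0 ≤ t) (z : V) :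
    ∃ g', HasDerivWithinAt (fun s => u s z - δ * φ z * exp (ν * s)) g' (Ici 0) t ∧
      g' < G.lap (fun y => u t y - δ * φ y * exp (ν * t)) z := by
  have hexp : HasDerivAt (fun s => δ * φ z * exp (ν * s)) (δ * φ z * (exp (ν * t) * ν)) t := by
    simpa using ((hasDerivAt_id t).const_mul ν).exp.const_mul (δ * φ z)
  refine ⟨_, (hu z t ht).sub hexp.hasDerivWithinAt, ?_⟩
  have hlap : G.lap (fun y => u t y - δ * φ y * exp (ν * t)) z
      = G.lap (u t) z - δ * exp (ν * t) * G.lap φ z := by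
    rw [← G.lap_const_mul, ← G.lap_sub]
    exact G.lap_congr (fun y _ => by ring) (by ring)
  have hc : 0 < δ * exp (ν * t) := by positivity
  have hφz := hφ.pos z
  have hμ := mul_le_mul_of_nonneg_left (hφ.lap_le z) hc.le
  rw [hlap]
  nlinarith [mul_lt_mul_of_pos_left hν (mul_pos hc hφz)]

theorem le_barrier (hφ : G.IsLyapunov φ μ) (h0 : ∀ z, u 0 z ≤ 0) {C : ℝ}
    (hC : ∀ t z, 0 ≤ t → u t z ≤ C)
    (hu : ∀ z t, 0 ≤ t → HasDerivWithinAt (fun s => u s z) (G.lap (u t) z) (Ici 0) t)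
    {δ : ℝ} (hδ : 0 < δ) {t : ℝ} (ht : 0 ≤ t) (z : V) :
    u t z ≤ δ * φ z * exp ((|μ| + 1) * t) := by
  set g : ℝ → V → ℝ := fun s y => u s y - δ * φ y * exp ((|μ| + 1) * s)
  by_contra! htz
  have hfar : ∀ s y, 0 ≤ s → C / δ < φ y → g s y < 0 := fun s y hs hy => by
    have hCφ : C < δ * φ y := by rwa [div_lt_iff₀' hδ] at hy
    have hexp : δ * φ y ≤ δ * φ y * exp ((|μ| + 1) * s) :=
      le_mul_of_one_le_right (mul_pos hδ (hφ.pos y)).le (one_le_exp (by positivity))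
    linarith [hC s y hs]
  set B := (hφ.finite_sublevel (C / δ)).toFinset
  have hzB : z ∈ B := by
    by_contra hz
    exact (hfar t z ht (by simpa [B] using hz)).not_ge (by simp only [g]; linarith)
  have hcont : ∀ y ∈ B, ContinuousOn (fun s => g s y) (Icc 0 t) := fun y _ =>
    ContinuousOn.sub (fun s hs => (hu y s hs.1).continuousWithinAt.mono Icc_subset_Ici_self)
      (by fun_prop)
  have hg0 : ∀ y ∈ B, g 0 y < 0 := fun y _ => by
    simp only [g, mul_zero, exp_zero, mul_one]
    linarith [h0 y, mul_pos hδ (hφ.pos y)]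
  obtain ⟨t', ⟨ht'0, -⟩, z', hz'B, hz'0, hspace, htime⟩ :=
    exists_first_touch ht hcont hg0 hzB (by simp only [g]; linarith)
  have hspace' : ∀ y, g t' y ≤ g t' z' := fun y => by
    by_cases hy : y ∈ B
    · exact hspace y hy
    · exact (hfar t' y ht'0.le (by simpa [B] using hy)).le.trans hz'0
  obtain ⟨g', hg', hlt⟩ := exists_hasDerivWithinAt_sub_barrier_lt_lap hφ hu hδ
    ((le_abs_self μ).trans_lt (lt_add_one _)) ht'0.le z'
  linarith [htime.hasDerivWithinAt_nonneg_of_Icc ht'0 (hg'.mono Icc_subset_Ici_self),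
    G.lap_nonpos_of_forall_le hspace']

theorem nonpos_of_isLyapunov (hφ : G.IsLyapunov φ μ) (h0 : ∀ z, u 0 z ≤ 0)
    (hC : ∃ C, ∀ t z, 0 ≤ t → u t z ≤ C)
    (hu : ∀ z t, 0 ≤ t → HasDerivWithinAt (fun s => u s z) (G.lap (u t) z) (Ici 0) t)
    {t : ℝ} (ht : 0 ≤ t) (z : V) : u t z ≤ 0 := by
  obtain ⟨C, hC⟩ := hC
  refine le_of_forall_pos_le_add fun ε hε => ?_
  have hA : 0 < φ z * exp ((|μ| + 1) * t) := mul_pos (hφ.pos z) (exp_pos _)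
  calc u t z ≤ ε / (φ z * exp ((|μ| + 1) * t)) * φ z * exp ((|μ| + 1) * t) :=
        le_barrier hφ h0 hC hu (div_pos hε hA) ht z
    _ = 0 + ε := by field_simp [(hφ.pos z).ne']; ring

end MaximumPrinciple

end WeightedGraph

theorem isHeatSolution_const {V : Type} (G : WeightedGraph V) {c : ℝ} (hc : 0 ≤ c) :
    IsHeatSolution G (fun _ => c) (fun _ _ => c) :=
  ⟨rfl, fun _ _ _ => hc, ⟨c, fun _ _ _ => le_rfl⟩, fun _ t _ => by
    simpa [G.lap_const] using hasDerivWithinAt_const t (Ici 0) c⟩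

theorem IsHeatSemigroup.apply_one_eq_one_of_isLyapunov {V : Type} {G : WeightedGraph V}
    {P : ℝ → (V → ℝ) → V → ℝ} (hP : IsHeatSemigroup G P) {φ : V → ℝ} {μ : ℝ}
    (hφ : G.IsLyapunov φ μ) {t : ℝ} (ht : 0 ≤ t) (x : V) : P t (fun _ => 1) x = 1 := by
  obtain ⟨⟨h0, hnonneg, -, hderiv⟩, hmin⟩ :=
    hP.1 (fun _ => 1) (fun _ => zero_le_one) ⟨1, fun _ => le_rfl⟩
  have hle : P t (fun _ => 1) x ≤ 1 := hmin _ (isHeatSolution_const G zero_le_one) t x ht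
  have hge : 1 - P t (fun _ => 1) x ≤ 0 := by
    refine G.nonpos_of_isLyapunov (u := fun s z => 1 - P s (fun _ => 1) z) hφ (fun z => ?_)
      ⟨1, fun s z hs => by linarith [hnonneg s z hs]⟩ (fun z s hs => ?_) ht x
    · simp [h0]
    · simpa [G.lap_const_sub] using (hderiv z s hs).const_sub 1
  linarith

theorem stmt10_general {V : Type} (G : WeightedGraph V)
    (hconn : G.toSimple.Connected)
    (P : ℝ → (V → ℝ) → V → ℝ) (hP : IsHeatSemigroup G P)
    (K : ℝ) (hRic : ∀ x y, x ≠ y → K ≤ G.curv x y) :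
    ∀ t : ℝ, 0 < t → ∀ x, P t (fun _ => 1) x = 1 := by
  intro t ht x
  exact hP.apply_one_eq_one_of_isLyapunov (G.isLyapunov_one_add_dist hconn hRic x) ht.le x

/-- A lower Ollivier curvature bound implies stochastic completeness: `P_t 1 = 1`. -/
theorem stmt10 {V : Type} [Countable V] (G : WeightedGraph V)
    (hconn : G.toSimple.Connected)
    (P : ℝ → (V → ℝ) → V → ℝ) (hP : IsHeatSemigroup G P)
    (K : ℝ) (hRic : ∀ x y, x ≠ y → K ≤ G.curv x y) :
    ∀ t : ℝ, 0 < t → ∀ x, P t (fun _ => 1) x = 1 :=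
  stmt10_general G hconn P hP K hRic
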